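/- The Clifford algebra G(0,3) = CliffordAlgebra Q of the negative definite quadratic form Q(v)=−v₁²−v₂²−v₃² on ℝ³ is isomorphic as an ℝ-algebra to ℍ × ℍ (equivalently to the tensor product of the split-complex numbers ℝ × ℝ with ℍ over ℝ). -/

import Mathlib

/-!
Send `v ∈ ℝ³` to `(q, -q)` with `q = v₀ i + v₁ j + v₂ k`; since `q² = Q(v)`, this lifts to an
algebra map `Cl(0,3) → ℍ × ℍ`. Its image contains both coordinate projections of every pair
(take `r ± ι v`), and also the central idempotent `(1, 0) = (1 - e₀e₁e₂)/2`, because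
`ijk = -1` while `(-i)(-j)(-k) = 1`. So the map is onto, and it is injective because both sides
have dimension `8 = 2³` (the Clifford algebra has the dimension of the exterior algebra).
-/

open CliffordAlgebra Module
open scoped Quaternion

/-- The quadratic form `Q(v) = -v₁² - v₂² - v₃²` on `ℝ³` (signature (0,3)). -/
noncomputable def Q03 : QuadraticForm ℝ (Fin 3 → ℝ) :=
  QuadraticMap.weightedSumSquares ℝ ![(-1 : ℝ), -1, -1]

section CliffordDimension

variable {K V : Type*} [Field K] [Invertible (2 : K)] [AddCommGroup V] [Module K V]
  [FiniteDimensional K V]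

instance CliffordAlgebra.finiteDimensional (Q : QuadraticForm K V) :
    FiniteDimensional K (CliffordAlgebra Q) :=
  have : FiniteDimensional K (ExteriorAlgebra K V) := .of_basis (finBasis K V).ExteriorAlgebra
  (equivExterior Q).symm.finiteDimensional

theorem CliffordAlgebra.finrank_eq_two_pow (Q : QuadraticForm K V) :
    finrank K (CliffordAlgebra Q) = 2 ^ finrank K V := by
  rw [(equivExterior Q).finrank_eq, finrank_eq_card_basis (finBasis K V).ExteriorAlgebra,
    Fintype.card_finset, Fintype.card_fin]

end CliffordDimension

theorem AlgHom.surjective_of_surjective_fst_snd {R A B C : Type*} [CommSemiring R] [Ring A]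
    [Ring B] [Ring C] [Algebra R A] [Algebra R B] [Algebra R C] (f : A →ₐ[R] B × C)
    (hidem : (1, 0) ∈ f.range) (hfst : Function.Surjective ((AlgHom.fst R B C).comp f))
    (hsnd : Function.Surjective ((AlgHom.snd R B C).comp f)) : Function.Surjective f := by
  rintro ⟨b, c⟩
  obtain ⟨e, he⟩ := hidem
  obtain ⟨x, hx⟩ := hfst b
  obtain ⟨y, hy⟩ := hsnd c
  refine ⟨e * x + (1 - e) * y, ?_⟩
  simp_all [Prod.ext_iff]

def pureQuaternion : (Fin 3 → ℝ) →ₗ[ℝ] ℍ[ℝ] where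
  toFun v := ⟨0, v 0, v 1, v 2⟩
  map_add' _ _ := QuaternionAlgebra.ext (add_zero 0).symm rfl rfl rfl
  map_smul' c _ := QuaternionAlgebra.ext (mul_zero c).symm rfl rfl rfl

section PureQuaternion

variable (v : Fin 3 → ℝ)

@[simp] theorem re_pureQuaternion : (pureQuaternion v).re = 0 := rfl
@[simp] theorem imI_pureQuaternion : (pureQuaternion v).imI = v 0 := rfl
@[simp] theorem imJ_pureQuaternion : (pureQuaternion v).imJ = v 1 := rfl
@[simp] theorem imK_pureQuaternion : (pureQuaternion v).imK = v 2 := rfl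

theorem pureQuaternion_mul_self :
    pureQuaternion v * pureQuaternion v = algebraMap ℝ ℍ[ℝ] (Q03 v) := by
  ext <;> simp [Q03, Fin.sum_univ_three] <;> ring

end PureQuaternion

theorem pureQuaternion_im (q : ℍ[ℝ]) : pureQuaternion ![q.imI, q.imJ, q.imK] = q.im := by
  ext <;> simp

theorem pureQuaternion_single_mul_mul :
    pureQuaternion (Pi.single 0 1) * pureQuaternion (Pi.single 1 1) *
      pureQuaternion (Pi.single 2 1) = -1 := by
  ext <;> simp

noncomputable def toQuaternionProd : CliffordAlgebra Q03 →ₐ[ℝ] ℍ[ℝ] × ℍ[ℝ] :=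
  lift Q03 ⟨pureQuaternion.prod (-pureQuaternion), fun v => by
    simp [Prod.algebraMap_apply, pureQuaternion_mul_self]⟩

theorem toQuaternionProd_ι (v : Fin 3 → ℝ) :
    toQuaternionProd (ι Q03 v) = (pureQuaternion v, -pureQuaternion v) :=
  lift_ι_apply _ _ _

theorem one_zero_mem_range_toQuaternionProd : (1, 0) ∈ toQuaternionProd.range := by
  refine (AlgHom.mem_range _).mpr ⟨(2⁻¹ : ℝ) •
    (1 - ι Q03 (Pi.single 0 1) * ι Q03 (Pi.single 1 1) * ι Q03 (Pi.single 2 1)), ?_⟩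
  simp [toQuaternionProd_ι, pureQuaternion_single_mul_mul, Prod.ext_iff,
    ← two_smul ℝ (1 : ℍ[ℝ]), smul_smul]

theorem toQuaternionProd_surjective : Function.Surjective toQuaternionProd := by
  refine toQuaternionProd.surjective_of_surjective_fst_snd one_zero_mem_range_toQuaternionProd
    (fun q => ⟨algebraMap ℝ _ q.re + ι Q03 ![q.imI, q.imJ, q.imK], ?_⟩)
    (fun q => ⟨algebraMap ℝ _ q.re - ι Q03 ![q.imI, q.imJ, q.imK], ?_⟩)
  all_goals simp [toQuaternionProd_ι, Prod.algebraMap_apply, pureQuaternion_im]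

/-- `G(0,3)` is isomorphic as an `ℝ`-algebra to `ℍ × ℍ`. -/
theorem G03_iso_quaternion_prod :
    Nonempty (CliffordAlgebra Q03 ≃ₐ[ℝ] ℍ[ℝ] × ℍ[ℝ]) := by
  have hdim : finrank ℝ (CliffordAlgebra Q03) = finrank ℝ (ℍ[ℝ] × ℍ[ℝ]) := by
    rw [finrank_eq_two_pow, finrank_prod, Quaternion.finrank_eq_four, finrank_fin_fun]
    norm_num
  have hinj : Function.Injective toQuaternionProd :=
    (LinearMap.injective_iff_surjective_of_finrank_eq_finrank hdim
      (f := toQuaternionProd.toLinearMap)).mpr toQuaternionProd_surjective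
  exact ⟨.ofBijective toQuaternionProd ⟨hinj, toQuaternionProd_surjective⟩⟩
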